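/- arXiv:1811.02345 — 3 statements merged into one kernel-verified Lean document; each statement's English description precedes it below -/
import Mathlib

section
/- Let x̄ ∈ K ∩ ℤⁿ with x̄ ≠ 0. Then Q(x̄) = {x ∈ ℝⁿ : x_i ≥ 0 for i = 1,…,n, and ∑_{i=1}^k d^k_i x_i ≥ ∑_{i=1}^k d^k_i x̄_i for k = 1,…,n}; that is, the n lex-cuts associated with x̄ together with the nonnegativity inequalities describe the polyhedron Q(x̄). -/
/-- Lexicographic strict order on `Fin n → ℝ` associated with the standard basis. -/
def lexLt {n : ℕ} (x y : Fin n → ℝ) : Prop :=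
  ∃ i : Fin n, x i < y i ∧ ∀ j : Fin n, j < i → x j = y j

/-- `x ⪯ y` iff `x ≺ y` or `x = y`. -/
def lexLe {n : ℕ} (x y : Fin n → ℝ) : Prop := lexLt x y ∨ x = y

/-- Membership in the cone `K = ℝⁿ₊`. -/
def inK {n : ℕ} (x : Fin n → ℝ) : Prop := ∀ i, 0 ≤ x i

/-- `x` is an integer point. -/
def isInt {n : ℕ} (x : Fin n → ℝ) : Prop := ∀ i, ∃ z : ℤ, x i = (z : ℝ)

/-- `Q(x̄) = conv {x ∈ K ∩ ℤⁿ : x ⪰ x̄}`. -/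
def Q {n : ℕ} (xb : Fin n → ℝ) : Set (Fin n → ℝ) :=
  convexHull ℝ {x | inK x ∧ isInt x ∧ lexLe xb x}

/-- The coefficients `d^k_i` of the `k`-th lex-cut associated with `x̄`. -/
noncomputable def dcoef {n : ℕ} (xb : Fin n → ℝ) (k i : Fin n) : ℝ :=
  if i = k then 1 else xb k * ∏ j ∈ Finset.Ioo i k, (xb j + 1)

/-!
If an integer point `x ⪰ x̄` first exceeds `x̄` at index `t`, then `x_t ≥ x̄_t + 1`, and the
coefficients are built so that `d^k_t = ∑_{t<i≤k} d^k_i x̄_i`: the gain at `t` pays for any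
decrease of the later coordinates, so every lex-cut is valid for `Q(x̄)`.

Conversely, induct on `n` and split off the first coordinate `c` of a point `(c, y)` satisfying
the cuts. It is a convex combination of `(⌊c⌋ + 1, 0)`, an integer point lex-above `x̄`, and
`(⌊c⌋, y / (1 - fract c))`. If `⌊c⌋ = x̄₀`, the cuts `k ≥ 1` for `(c, y)` are exactly the cuts of
the tail of `x̄` for the rescaled `y / (1 - fract c)`; if `⌊c⌋ > x̄₀`, any nonnegative integer tail
will do and the rescaled `y` lies in the nonnegative orthant `Q(0)`.
-/

open Finset Matrix

theorem sum_mul_prod_filter_lt_add_one {ι R : Type*} [LinearOrder ι] [CommRing R]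
    (s : Finset ι) (a : ι → R) :
    ∑ i ∈ s, a i * ∏ j ∈ s with i < j, (a j + 1) = ∏ j ∈ s, (a j + 1) - 1 := by
  have h := prod_add_ordered s (fun j => a j + 1) (fun j => -a j)
  simp only [add_neg_cancel_comm, prod_const_one, mul_one, neg_mul, sum_neg_distrib] at h
  linear_combination h

section

variable {n : ℕ} (xb : Fin n → ℝ)

theorem dcoef_nonneg (hK : inK xb) (k i : Fin n) : 0 ≤ dcoef xb k i := by
  unfold dcoef
  split_ifs
  · exact zero_le_one
  · exact mul_nonneg (hK k) (prod_nonneg fun j _ => by linarith [hK j])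

theorem sum_Ioc_dcoef_mul_self {t k : Fin n} (htk : t < k) :
    ∑ i ∈ Ioc t k, dcoef xb k i * xb i = dcoef xb k t := by
  have hIoo : ∀ i ∈ Ioo t k, Ioo i k = {j ∈ Ioo t k | i < j} := fun i hi => by
    ext j
    simp only [mem_Ioo, mem_filter] at hi ⊢
    constructor
    · exact fun h => ⟨⟨hi.1.trans h.1, h.2⟩, h.1⟩
    · exact fun h => ⟨h.2, h.1.2⟩
  have hterm : ∀ i ∈ Ioo t k, dcoef xb k i * xb i
      = xb k * (xb i * ∏ j ∈ Ioo t k with i < j, (xb j + 1)) := fun i hi => by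
    rw [dcoef, if_neg (mem_Ioo.mp hi).2.ne, hIoo i hi]
    ring
  rw [← Ioo_insert_right htk, sum_insert (by simp), sum_congr rfl hterm, ← mul_sum,
    sum_mul_prod_filter_lt_add_one, dcoef, dcoef, if_pos rfl, if_neg htk.ne]
  ring

theorem sum_Ioc_dcoef_mul_self_le {t k : Fin n} (htk : t ≤ k) :
    ∑ i ∈ Ioc t k, dcoef xb k i * xb i ≤ dcoef xb k t := by
  rcases htk.lt_or_eq with htk | rfl
  · exact (sum_Ioc_dcoef_mul_self xb htk).le
  · simp [dcoef]

noncomputable def lexCutForm (k : Fin n) (x : Fin n → ℝ) : ℝ := ∑ i ∈ Iic k, dcoef xb k i * x i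

def lexCutPolyhedron : Set (Fin n → ℝ) :=
  {x | (∀ i, 0 ≤ x i) ∧ ∀ k, lexCutForm xb k x ≥ lexCutForm xb k xb}

theorem isLinearMap_lexCutForm (k : Fin n) : IsLinearMap ℝ (lexCutForm xb k) where
  map_add x y := by simp only [lexCutForm, Pi.add_apply, mul_add, sum_add_distrib]
  map_smul c x := by simp only [lexCutForm, Pi.smul_apply, smul_eq_mul, mul_sum, mul_left_comm]

theorem convex_lexCutPolyhedron : Convex ℝ (lexCutPolyhedron xb) := by
  have h : lexCutPolyhedron xb = (⋂ i, {x | 0 ≤ x i}) ∩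
      ⋂ k, {x | lexCutForm xb k xb ≤ lexCutForm xb k x} := by
    ext x
    simp [lexCutPolyhedron]
  rw [h]
  exact (convex_iInter fun i => convex_halfSpace_ge (LinearMap.proj i).isLinear 0).inter
    (convex_iInter fun k => convex_halfSpace_ge (isLinearMap_lexCutForm xb k) _)

theorem add_one_le_of_isInt_of_lt {x : Fin n → ℝ} (hI : isInt xb) (hIx : isInt x) {t : Fin n}
    (h : xb t < x t) : xb t + 1 ≤ x t := by
  obtain ⟨z, hz⟩ := hI t
  obtain ⟨w, hw⟩ := hIx t
  rw [hz, hw] at h ⊢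
  exact_mod_cast Int.add_one_le_of_lt (by exact_mod_cast h)

theorem lexCutForm_le_of_lexLe (hK : inK xb) (hI : isInt xb) {x : Fin n → ℝ} (hKx : inK x)
    (hIx : isInt x) (hlex : lexLe xb x) (k : Fin n) :
    lexCutForm xb k xb ≤ lexCutForm xb k x := by
  obtain rfl | ⟨t, hlt, hagree⟩ := hlex.symm
  · exact le_rfl
  rcases lt_or_ge k t with hkt | htk
  · exact (sum_congr rfl fun i hi => by rw [hagree i ((mem_Iic.mp hi).trans_lt hkt)]).le
  have hsplit : {i ∈ Iic k | ¬i < t} = insert t (Ioc t k) := by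
    rw [Ioc_insert_left htk]
    ext i
    simp [and_comm]
  have hhead : ∑ i ∈ Iic k with i < t, dcoef xb k i * xb i
      = ∑ i ∈ Iic k with i < t, dcoef xb k i * x i :=
    sum_congr rfl fun i hi => by rw [hagree i (mem_filter.mp hi).2]
  have hstep := mul_le_mul_of_nonneg_left (add_one_le_of_isInt_of_lt xb hI hIx hlt)
    (dcoef_nonneg xb hK k t)
  have htail := sum_Ioc_dcoef_mul_self_le xb htk
  have hx_tail : 0 ≤ ∑ i ∈ Ioc t k, dcoef xb k i * x i :=
    sum_nonneg fun i _ => mul_nonneg (dcoef_nonneg xb hK k i) (hKx i)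
  unfold lexCutForm
  rw [← sum_filter_add_sum_filter_not _ (· < t), ← sum_filter_add_sum_filter_not (Iic k) (· < t),
    hsplit, sum_insert (by simp), sum_insert (by simp), hhead]
  linarith

end

theorem Q_subset_lexCutPolyhedron {n : ℕ} {xb : Fin n → ℝ} (hK : inK xb) (hI : isInt xb) :
    Q xb ⊆ lexCutPolyhedron xb :=
  convexHull_min (fun _ ⟨hKx, hIx, hlex⟩ => ⟨hKx, lexCutForm_le_of_lexLe xb hK hI hKx hIx hlex⟩)
    (convex_lexCutPolyhedron xb)

theorem lexCutPolyhedron_zero {m : ℕ} : lexCutPolyhedron (0 : Fin m → ℝ) = {x | inK x} := by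
  ext x
  refine ⟨And.left, fun hx => ⟨hx, fun k => ?_⟩⟩
  simp only [lexCutForm, Pi.zero_apply, mul_zero, sum_const_zero]
  exact sum_nonneg fun i _ => mul_nonneg (dcoef_nonneg 0 (fun _ => le_rfl) k i) (hx i)

-- `Q xb` is definitionally `convexHull ℝ (lexGeIntPoints xb)`.
def lexGeIntPoints {n : ℕ} (xb : Fin n → ℝ) : Set (Fin n → ℝ) :=
  {x | inK x ∧ isInt x ∧ lexLe xb x}

section vecCons

variable {m : ℕ}

theorem inK_vecCons {a : ℝ} {v : Fin m → ℝ} : inK (vecCons a v) ↔ 0 ≤ a ∧ inK v := by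
  simp [inK, Fin.forall_fin_succ]

theorem isInt_vecCons {a : ℝ} {v : Fin m → ℝ} :
    isInt (vecCons a v) ↔ (∃ z : ℤ, a = z) ∧ isInt v := by
  simp [isInt, Fin.forall_fin_succ]

theorem lexLt_vecCons_of_lt {a b : ℝ} (h : a < b) (u v : Fin m → ℝ) :
    lexLt (vecCons a u) (vecCons b v) :=
  ⟨0, by simpa using h, fun j hj => absurd hj (Fin.not_lt_zero j)⟩

theorem lexLe_vecCons_vecCons (a : ℝ) {u v : Fin m → ℝ} (h : lexLe u v) :
    lexLe (vecCons a u) (vecCons a v) := by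
  obtain ⟨t, hlt, hagree⟩ | rfl := h
  · refine Or.inl ⟨t.succ, by simpa using hlt, Fin.cases (fun _ => rfl) fun j hj => ?_⟩
    simpa using hagree j (Fin.succ_lt_succ_iff.mp hj)
  · exact Or.inr rfl

theorem vecCons_mem_convexHull {S : Set (Fin (m + 1) → ℝ)} {T : Set (Fin m → ℝ)} {b : ℝ}
    (hT : ∀ w ∈ T, vecCons b w ∈ S) {y : Fin m → ℝ} (hy : y ∈ convexHull ℝ T) :
    vecCons b y ∈ convexHull ℝ S := by
  refine convexHull_min (t := {y | vecCons b y ∈ convexHull ℝ S})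
    (fun w hw => subset_convexHull ℝ S (hT w hw)) ?_ hy
  intro u hu v hv α β hα hβ hαβ
  have h := convex_convexHull ℝ S hu hv hα hβ hαβ
  rwa [smul_cons, smul_cons, cons_add_cons, smul_eq_mul, smul_eq_mul, ← add_mul, hαβ,
    one_mul] at h

theorem vecCons_add_smul_mem_Q {xb : Fin (m + 1) → ℝ} {xb' : Fin m → ℝ} {b l : ℝ}
    (hl0 : 0 ≤ l) (hl1 : l ≤ 1) (htop : vecCons (b + 1) 0 ∈ lexGeIntPoints xb)
    (hslice : ∀ w ∈ lexGeIntPoints xb', vecCons b w ∈ lexGeIntPoints xb)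
    {y : Fin m → ℝ} (hy : y ∈ Q xb') : vecCons (b + l) ((1 - l) • y) ∈ Q xb := by
  have h := convex_convexHull ℝ _ (vecCons_mem_convexHull hslice hy)
    (subset_convexHull ℝ _ htop) (sub_nonneg.mpr hl1) hl0 (sub_add_cancel 1 l)
  rwa [smul_cons, smul_cons, cons_add_cons, smul_zero, add_zero, smul_eq_mul, smul_eq_mul,
    mul_add, mul_one, ← add_assoc, ← add_mul, sub_add_cancel, one_mul] at h

theorem sum_Iic_succ {M : Type*} [AddCommMonoid M] (f : Fin (m + 1) → M) (k : Fin m) :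
    ∑ i ∈ Iic k.succ, f i = f 0 + ∑ i ∈ Iic k, f i.succ := by
  rw [← Icc_bot, ← Ioc_insert_left bot_le, bot_eq_zero, sum_insert (by simp),
    ← Fin.map_succEmb_Iic, sum_map]
  rfl

theorem dcoef_vecCons_succ_succ (a : ℝ) (xb : Fin m → ℝ) (k i : Fin m) :
    dcoef (vecCons a xb) k.succ i.succ = dcoef xb k i := by
  simp only [dcoef, Fin.succ_inj, ← Fin.map_succEmb_Ioo, prod_map, Fin.coe_succEmb, cons_val_succ]

theorem dcoef_vecCons_succ_zero (a : ℝ) (xb : Fin m → ℝ) (k : Fin m) :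
    dcoef (vecCons a xb) k.succ 0 = lexCutForm xb k xb := by
  rw [← sum_Ioc_dcoef_mul_self _ (Fin.succ_pos k), ← Fin.map_succEmb_Iic, sum_map, lexCutForm]
  simp only [Fin.coe_succEmb, dcoef_vecCons_succ_succ, cons_val_succ]

theorem lexCutForm_zero (xb x : Fin (m + 1) → ℝ) : lexCutForm xb 0 x = x 0 := by
  simp [lexCutForm, ← bot_eq_zero, dcoef]

theorem lexCutForm_vecCons_succ (a c : ℝ) (xb y : Fin m → ℝ) (k : Fin m) :
    lexCutForm (vecCons a xb) k.succ (vecCons c y) =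
      lexCutForm xb k xb * c + lexCutForm xb k y := by
  simp only [lexCutForm, sum_Iic_succ, dcoef_vecCons_succ_zero, dcoef_vecCons_succ_succ,
    cons_val_zero, cons_val_succ]

theorem le_of_vecCons_mem_lexCutPolyhedron {a c : ℝ} {xb y : Fin m → ℝ}
    (hx : vecCons c y ∈ lexCutPolyhedron (vecCons a xb)) : a ≤ c := by
  simpa [lexCutForm_zero] using hx.2 0

theorem inv_smul_mem_lexCutPolyhedron_of_vecCons {a c : ℝ} {xb y : Fin m → ℝ} (hca : c - a < 1)
    (hx : vecCons c y ∈ lexCutPolyhedron (vecCons a xb)) :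
    (1 - (c - a))⁻¹ • y ∈ lexCutPolyhedron xb := by
  have hpos : 0 < 1 - (c - a) := sub_pos.mpr hca
  refine ⟨fun i => smul_nonneg (inv_nonneg.mpr hpos.le) ((inK_vecCons.mp hx.1).2 i), fun k => ?_⟩
  have hcut := hx.2 k.succ
  rw [ge_iff_le, lexCutForm_vecCons_succ, lexCutForm_vecCons_succ] at hcut
  rw [ge_iff_le, (isLinearMap_lexCutForm xb k).map_smul, smul_eq_mul, le_inv_mul_iff₀ hpos]
  linarith

theorem vecCons_add_one_zero_mem_lexGeIntPoints {a : ℝ} {xb : Fin m → ℝ} {b : ℤ} (ha : 0 ≤ a)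
    (hab : a ≤ b) : vecCons ((b : ℝ) + 1) 0 ∈ lexGeIntPoints (vecCons a xb) :=
  ⟨inK_vecCons.mpr ⟨by linarith, fun _ => le_rfl⟩,
    isInt_vecCons.mpr ⟨⟨b + 1, by push_cast; rfl⟩, fun _ => ⟨0, by simp⟩⟩,
    Or.inl (lexLt_vecCons_of_lt (by linarith) _ _)⟩

end vecCons

theorem mem_Q_of_mem_lexCutPolyhedron {m : ℕ} {xb : Fin m → ℝ} (hK : inK xb) (hI : isInt xb)
    {x : Fin m → ℝ} (hx : x ∈ lexCutPolyhedron xb) : x ∈ Q xb := by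
  induction m with
  | zero => exact subset_convexHull ℝ _ ⟨hx.1, fun i => i.elim0, Or.inr (Subsingleton.elim _ _)⟩
  | succ m ih =>
    obtain ⟨a, xb', rfl⟩ : ∃ a xb', xb = vecCons a xb' := ⟨_, _, (cons_head_tail xb).symm⟩
    obtain ⟨c, y, rfl⟩ : ∃ c y, x = vecCons c y := ⟨_, _, (cons_head_tail x).symm⟩
    obtain ⟨ha, hK'⟩ := inK_vecCons.mp hK
    obtain ⟨⟨z, rfl⟩, hI'⟩ := isInt_vecCons.mp hI
    have hzc : z ≤ ⌊c⌋ := Int.le_floor.mpr (le_of_vecCons_mem_lexCutPolyhedron hx)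
    have htop := vecCons_add_one_zero_mem_lexGeIntPoints (xb := xb') ha
      (show (z : ℝ) ≤ ⌊c⌋ by exact_mod_cast hzc)
    have hfract := Int.fract_nonneg c
    have hfract1 := Int.fract_lt_one c
    rw [show vecCons c y = vecCons ((⌊c⌋ : ℝ) + Int.fract c)
        ((1 - Int.fract c) • (1 - Int.fract c)⁻¹ • y) by
      rw [Int.floor_add_fract, smul_inv_smul₀ (sub_pos.mpr hfract1).ne']]
    rcases hzc.eq_or_lt with rfl | hzc
    · have hslice : ∀ w ∈ lexGeIntPoints xb',
          vecCons (⌊c⌋ : ℝ) w ∈ lexGeIntPoints (vecCons (⌊c⌋ : ℝ) xb') :=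
        fun w ⟨hKw, hIw, hw⟩ => ⟨inK_vecCons.mpr ⟨ha, hKw⟩, isInt_vecCons.mpr ⟨⟨_, rfl⟩, hIw⟩,
          lexLe_vecCons_vecCons _ hw⟩
      have hy := inv_smul_mem_lexCutPolyhedron_of_vecCons (by rwa [Int.self_sub_floor]) hx
      rw [Int.self_sub_floor] at hy
      exact vecCons_add_smul_mem_Q hfract hfract1.le htop hslice (ih hK' hI' hy)
    · have hslice : ∀ w ∈ lexGeIntPoints 0,
          vecCons (⌊c⌋ : ℝ) w ∈ lexGeIntPoints (vecCons (z : ℝ) xb') :=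
        fun w ⟨hKw, hIw, _⟩ => ⟨inK_vecCons.mpr ⟨ha.trans (by exact_mod_cast hzc.le), hKw⟩,
          isInt_vecCons.mpr ⟨⟨_, rfl⟩, hIw⟩,
          Or.inl (lexLt_vecCons_of_lt (by exact_mod_cast hzc) _ _)⟩
      have hy : inK ((1 - Int.fract c)⁻¹ • y) := fun i =>
        smul_nonneg (inv_nonneg.mpr (sub_pos.mpr hfract1).le) ((inK_vecCons.mp hx.1).2 i)
      exact vecCons_add_smul_mem_Q hfract hfract1.le htop hslice
        (ih (fun _ => le_rfl) (fun _ => ⟨0, by simp⟩) (lexCutPolyhedron_zero ▸ hy))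

theorem stmt6_general {n : ℕ} (xb : Fin n → ℝ) (hK : inK xb) (hI : isInt xb) :
    Q xb = {x : Fin n → ℝ | (∀ i, 0 ≤ x i) ∧ ∀ k : Fin n,
      ∑ i ∈ Finset.Iic k, dcoef xb k i * x i ≥ ∑ i ∈ Finset.Iic k, dcoef xb k i * xb i} :=
  (Q_subset_lexCutPolyhedron hK hI).antisymm fun _ hx => mem_Q_of_mem_lexCutPolyhedron hK hI hx

/-- For `x̄ ∈ K ∩ ℤⁿ` with `x̄ ≠ 0`, the `n` lex-cuts associated with `x̄` together with
the nonnegativity inequalities describe the polyhedron `Q(x̄)`. -/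
theorem stmt6 {n : ℕ} (xb : Fin n → ℝ) (hK : inK xb) (hI : isInt xb) (hx0 : xb ≠ 0) :
    Q xb = {x : Fin n → ℝ | (∀ i, 0 ≤ x i) ∧ ∀ k : Fin n,
      ∑ i ∈ Finset.Iic k, dcoef xb k i * x i ≥ ∑ i ∈ Finset.Iic k, dcoef xb k i * xb i} :=
  stmt6_general xb hK hI
end

section
/- Let c¹,…,cⁿ be a lattice basis of ℤⁿ, let x̄ ∈ K_C ∩ ℤⁿ with c^i·x̄ > 0 for at least one i, and let ℓ be the largest index i with c^i·x̄ > 0. The set of extreme points of Q_C(x̄) is exactly {v¹,…,v^ℓ}, where for k = 1,…,ℓ−1 the point v^k is the unique point of ℝⁿ satisfying c^i·v^k = c^i·x̄ for i = 1,…,k−1, c^k·v^k = c^k·x̄ + 1, and c^i·v^k = 0 for i = k+1,…,n, and v^ℓ = x̄. Moreover, the recession cone of Q_C(x̄) is K_C, and Q_C(x̄) is full-dimensional. -/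
/-- Dot product of an integer vector with a real vector. -/
def rdot {n : ℕ} (c : Fin n → ℤ) (x : Fin n → ℝ) : ℝ := ∑ j, (c j : ℝ) * x j

/-- Lexicographic strict order associated with the lattice basis given by the rows of `C`:
`x ≺_C y` iff `cⁱ·x < cⁱ·y` at the smallest index `i` where `cⁱ·x ≠ cⁱ·y`. -/
def lexLtC {n : ℕ} (C : Matrix (Fin n) (Fin n) ℤ) (x y : Fin n → ℝ) : Prop :=
  ∃ i : Fin n, rdot (C i) x < rdot (C i) y ∧ ∀ j : Fin n, j < i → rdot (C j) x = rdot (C j) y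

/-- `x ⪯_C y` iff `x ≺_C y` or `x = y`. -/
def lexLeC {n : ℕ} (C : Matrix (Fin n) (Fin n) ℤ) (x y : Fin n → ℝ) : Prop :=
  lexLtC C x y ∨ x = y

/-- `Q_C(x̄) = conv {x ∈ K_C ∩ ℤⁿ : x ⪰_C x̄}`, where
`K_C = {x : cⁱ·x ≥ 0 for all i}`. -/
def QC {n : ℕ} (C : Matrix (Fin n) (Fin n) ℤ) (xb : Fin n → ℝ) : Set (Fin n → ℝ) :=
  convexHull ℝ {x | (∀ i, 0 ≤ rdot (C i) x) ∧ isInt x ∧ lexLeC C xb x}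

open Matrix

section LexOrder
variable {ι : Type*} [LinearOrder ι]

theorem toLex_smul_lt_smul {u w : ι → ℝ} {c : ℝ} (hc : 0 < c) (h : toLex u < toLex w) :
    toLex (c • u) < toLex (c • w) := by
  obtain ⟨i, hpre, hi⟩ := h
  exact ⟨i, fun j hj => congrArg (c * ·) (hpre j hj), mul_lt_mul_of_pos_left hi hc⟩

theorem toLex_smul_le_smul {u w : ι → ℝ} {c : ℝ} (hc : 0 ≤ c) (h : toLex u ≤ toLex w) :
    toLex (c • u) ≤ toLex (c • w) := by
  rcases hc.eq_or_lt with rfl | hc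
  · simp
  rcases h.eq_or_lt with h | h
  · rw [toLex_inj.mp h]
  · exact (toLex_smul_lt_smul hc h).le

theorem eq_on_Iio_or_exists_lt_of_toLex_le {α : Type*} [PartialOrder α] {u w : ι → α}
    (h : toLex u ≤ toLex w) (k : ι) :
    (∀ j < k, u j = w j) ∨ ∃ i < k, (∀ j < i, u j = w j) ∧ u i < w i := by
  rcases h.lt_or_eq with ⟨i, hpre, hi⟩ | h
  · by_cases hik : i < k
    · exact Or.inr ⟨i, hik, hpre, hi⟩
    · exact Or.inl fun j hj => hpre j (hj.trans_le (not_lt.mp hik))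
  · exact Or.inl fun j _ => congrFun (toLex_inj.mp h) j

variable {E : Type*} [AddCommGroup E] [Module ℝ E]

theorem mem_extremePoints_convexHull_of_lex_min (F : E →ₗ[ℝ] ι → ℝ)
    (hF : Function.Injective F) {S : Set E} {v : E} (hv : v ∈ S)
    (hmin : ∀ s ∈ S, toLex (F v) ≤ toLex (F s)) : v ∈ (convexHull ℝ S).extremePoints ℝ := by
  set T := {x | toLex (F v) ≤ toLex (F x)}
  have hcomb : ∀ (a b : ℝ) (x y : E), F (a • x + b • y) = a • F x + b • F y :=
    fun a b x y => by simp
  have hsplit : ∀ a b : ℝ, a + b = 1 → toLex (F v) = toLex (a • F v) + toLex (b • F v) :=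
    fun a b hab => by rw [← toLex_add, ← add_smul, hab, one_smul]
  have hT : Convex ℝ T := by
    intro x hx y hy a b ha hb hab
    show toLex (F v) ≤ toLex (F (a • x + b • y))
    rw [hsplit a b hab, hcomb, toLex_add]
    exact add_le_add (toLex_smul_le_smul ha hx) (toLex_smul_le_smul hb hy)
  have hST : convexHull ℝ S ⊆ T := convexHull_min hmin hT
  refine ⟨subset_convexHull ℝ S hv, fun x hx y hy ⟨a, b, ha, hb, hab, hxy⟩ => ?_⟩
  refine hF (toLex_inj.mp ((hST hx).eq_of_not_lt fun hlt => lt_irrefl (toLex (F v)) ?_).symm)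
  calc toLex (F v) = toLex (a • F v) + toLex (b • F v) := hsplit a b hab
    _ < toLex (a • F x) + toLex (b • F y) :=
        add_lt_add_of_lt_of_le (toLex_smul_lt_smul ha hlt) (toLex_smul_le_smul hb.le (hST hy))
    _ = toLex (F v) := by rw [← toLex_add, ← hcomb, hxy]

end LexOrder

section Convex
variable {E : Type*} [AddCommGroup E] [Module ℝ E]

theorem eq_of_mem_extremePoints_of_two_smul_sub_mem {A : Set E} {x w : E}
    (hx : x ∈ A.extremePoints ℝ) (hw : w ∈ A) (hw' : (2 : ℝ) • x - w ∈ A) : w = x :=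
  (hx.2 hw hw' ⟨1 / 2, 1 / 2, by norm_num, by norm_num, by norm_num, by module⟩)

theorem add_smul_mem_convexHull_of_add_mem {S : Set E} {e : E} (hS : ∀ s ∈ S, s + e ∈ S)
    {x : E} (hx : x ∈ convexHull ℝ S) {t : ℝ} (ht : 0 ≤ t) : x + t • e ∈ convexHull ℝ S := by
  have hmul : ∀ s ∈ S, ∀ m : ℕ, s + (m : ℝ) • e ∈ S := by
    intro s hs m
    induction m with
    | zero => simpa using hs
    | succ m ih => simpa [add_smul, add_assoc] using hS _ ih
  refine convexHull_min (fun s hs => ?_)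
    ((convex_convexHull ℝ S).translate_preimage_left (t • e)) hx
  set m : ℕ := ⌈t⌉₊ + 1
  have hm : (0 : ℝ) < m := by positivity
  have hseg := (convex_convexHull ℝ S).add_smul_mem (subset_convexHull ℝ S hs)
    (subset_convexHull ℝ S (hmul s hs m)) (t := t / m)
    ⟨by positivity, (div_le_one hm).mpr ((Nat.le_ceil t).trans (by simp [m]))⟩
  rwa [smul_smul, div_mul_cancel₀ t hm.ne'] at hseg

end Convex

theorem int_add_one_le_of_lt {r s : ℝ} (hr : ∃ z : ℤ, r = z) (hs : ∃ z : ℤ, s = z)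
    (h : r < s) : r + 1 ≤ s := by
  obtain ⟨a, rfl⟩ := hr
  obtain ⟨b, rfl⟩ := hs
  exact_mod_cast Int.add_one_le_of_lt (by exact_mod_cast h)

section Coordinates
variable {n : ℕ} (C : Matrix (Fin n) (Fin n) ℤ)

noncomputable def coords : (Fin n → ℝ) →ₗ[ℝ] Fin n → ℝ := (C.map ((↑) : ℤ → ℝ)).mulVecLin

@[simp]
theorem coords_apply (x : Fin n → ℝ) (i : Fin n) : coords C x i = rdot (C i) x := by
  simp [coords, rdot, Matrix.mulVec, dotProduct]

noncomputable def ofCoords (b : Fin n → ℝ) : Fin n → ℝ := C⁻¹.map ((↑) : ℤ → ℝ) *ᵥ b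

variable {C}

theorem intCast_mulVec_intCast_mulVec {A B : Matrix (Fin n) (Fin n) ℤ} (h : A * B = 1)
    (v : Fin n → ℝ) : A.map ((↑) : ℤ → ℝ) *ᵥ (B.map ((↑) : ℤ → ℝ) *ᵥ v) = v := by
  rw [mulVec_mulVec]
  change (A.map (Int.castRingHom ℝ) * B.map (Int.castRingHom ℝ)) *ᵥ v = v
  rw [← Matrix.map_mul, h, Matrix.map_one _ (map_zero _) (map_one _), one_mulVec]

theorem coords_ofCoords (hC : IsUnit C.det) (b : Fin n → ℝ) : coords C (ofCoords C b) = b :=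
  intCast_mulVec_intCast_mulVec (mul_nonsing_inv C hC) b

theorem ofCoords_coords (hC : IsUnit C.det) (x : Fin n → ℝ) : ofCoords C (coords C x) = x :=
  intCast_mulVec_intCast_mulVec (nonsing_inv_mul C hC) x

theorem ofCoords_mem_preimage (hC : IsUnit C.det) {A : Set (Fin n → ℝ)} {b : Fin n → ℝ} :
    ofCoords C b ∈ coords C ⁻¹' A ↔ b ∈ A := by
  rw [Set.mem_preimage, coords_ofCoords hC]

theorem coords_injective (hC : IsUnit C.det) : Function.Injective (coords C) :=
  Function.LeftInverse.injective (ofCoords_coords hC)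

theorem isInt_intCast_mulVec (M : Matrix (Fin n) (Fin n) ℤ) {y : Fin n → ℝ} (hy : isInt y) :
    isInt (M.map ((↑) : ℤ → ℝ) *ᵥ y) := by
  choose z hz using hy
  obtain rfl : y = fun i => (z i : ℝ) := funext hz
  exact fun i => ⟨(M *ᵥ z) i, (RingHom.map_mulVec (Int.castRingHom ℝ) M z i).symm⟩

theorem isInt_coords_iff (hC : IsUnit C.det) {x : Fin n → ℝ} : isInt (coords C x) ↔ isInt x :=
  ⟨fun h => ofCoords_coords hC x ▸ isInt_intCast_mulVec _ h, isInt_intCast_mulVec C⟩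

theorem lexLeC_iff (hC : IsUnit C.det) {x y : Fin n → ℝ} :
    lexLeC C x y ↔ toLex (coords C x) ≤ toLex (coords C y) := by
  rw [lexLeC, le_iff_lt_or_eq, toLex_inj, (coords_injective hC).eq_iff]
  refine or_congr_left ?_
  simp only [lexLtC, ← coords_apply]
  exact exists_congr fun i => and_comm

end Coordinates

section LexIntUpper
variable {n : ℕ}

theorem isInt_add {x y : Fin n → ℝ} (hx : isInt x) (hy : isInt y) : isInt (x + y) := fun i =>
  let ⟨a, ha⟩ := hx i
  let ⟨b, hb⟩ := hy i
  ⟨a + b, by simp [ha, hb]⟩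

theorem isInt_sub {x y : Fin n → ℝ} (hx : isInt x) (hy : isInt y) : isInt (x - y) := fun i =>
  let ⟨a, ha⟩ := hx i
  let ⟨b, hb⟩ := hy i
  ⟨a - b, by simp [ha, hb]⟩

theorem isInt_single (i : Fin n) : isInt (Pi.single i 1) := fun j =>
  ⟨(Pi.single i 1 : Fin n → ℤ) j, by rcases eq_or_ne j i with rfl | h <;> simp [*]⟩

def lexIntUpper (b : Fin n → ℝ) : Set (Fin n → ℝ) := {y | 0 ≤ y ∧ isInt y ∧ toLex b ≤ toLex y}

def vertexCoords (b : Fin n → ℝ) (k : Fin n) : Fin n → ℝ :=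
  fun i => if i < k then b i else if i = k then b k + 1 else 0

def tailSumAt (k : Fin n) : (Fin n → ℝ) →ₗ[ℝ] Fin n → ℝ where
  toFun y := Function.update y k (y k + ∑ j ∈ Finset.Ioi k, y j)
  map_add' x y := by
    ext i
    rcases eq_or_ne i k with rfl | h
    · simp only [Function.update_self, Pi.add_apply, Finset.sum_add_distrib]
      ring
    · simp [h]
  map_smul' c y := by
    ext i
    rcases eq_or_ne i k with rfl | h
    · simp [Finset.mul_sum, mul_add]
    · simp [h]

theorem tailSumAt_apply_self (k : Fin n) (y : Fin n → ℝ) :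
    tailSumAt k y k = y k + ∑ j ∈ Finset.Ioi k, y j := by
  simp [tailSumAt]

theorem tailSumAt_apply_of_ne {k i : Fin n} (h : i ≠ k) (y : Fin n → ℝ) :
    tailSumAt k y i = y i := by
  simp [tailSumAt, h]

theorem tailSumAt_injective (k : Fin n) : Function.Injective (tailSumAt k) := by
  intro x y hxy
  have hne : ∀ i, i ≠ k → x i = y i := fun i hi => by
    simpa [tailSumAt_apply_of_ne hi] using congrFun hxy i
  have htail : ∑ j ∈ Finset.Ioi k, x j = ∑ j ∈ Finset.Ioi k, y j :=
    Finset.sum_congr rfl fun j hj => hne j (Finset.mem_Ioi.mp hj).ne'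
  have hk := congrFun hxy k
  rw [tailSumAt_apply_self, tailSumAt_apply_self, htail, add_left_inj] at hk
  funext i
  rcases eq_or_ne i k with rfl | hi
  · exact hk
  · exact hne i hi

variable {b : Fin n → ℝ}

theorem add_mem_lexIntUpper {y d : Fin n → ℝ} (hy : y ∈ lexIntUpper b) (hd : 0 ≤ d)
    (hdI : isInt d) : y + d ∈ lexIntUpper b := by
  refine ⟨add_nonneg hy.1 hd, isInt_add hy.2.1 hdI, hy.2.2.trans ?_⟩
  rw [toLex_add]
  exact le_add_of_nonneg_right (Pi.toLex_monotone hd)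

theorem vertexCoords_mem_lexIntUpper (hb0 : 0 ≤ b) (hbI : isInt b) (k : Fin n) :
    vertexCoords b k ∈ lexIntUpper b := by
  refine ⟨fun i => ?_, fun i => ?_, le_of_lt ⟨k, fun j hj => by simp [vertexCoords, hj], ?_⟩⟩
  · simp only [vertexCoords, Pi.zero_apply]
    split_ifs
    · exact hb0 i
    · exact add_nonneg (hb0 k) zero_le_one
    · exact le_rfl
  · obtain ⟨z, hz⟩ := hbI i
    obtain ⟨w, hw⟩ := hbI k
    simp only [vertexCoords]
    split_ifs
    · exact ⟨z, hz⟩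
    · exact ⟨w + 1, by rw [hw, Int.cast_add, Int.cast_one]⟩
    · exact ⟨0, by simp⟩
  · simp [vertexCoords]

theorem eq_vertexCoords_iff {y : Fin n → ℝ} {k : Fin n} :
    y = vertexCoords b k ↔ (∀ i < k, y i = b i) ∧ y k = b k + 1 ∧ ∀ i, k < i → y i = 0 := by
  refine ⟨by rintro rfl; exact ⟨fun i hi => by simp [vertexCoords, hi], by simp [vertexCoords],
    fun i hi => by simp [vertexCoords, hi.ne', not_lt.mpr hi.le]⟩, fun ⟨hlt, heq, hgt⟩ => ?_⟩
  funext i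
  rcases lt_trichotomy i k with h | rfl | h
  · simp [vertexCoords, h, hlt i h]
  · simp [vertexCoords, heq]
  · simp [vertexCoords, h.ne', not_lt.mpr h.le, hgt i h]

variable {ℓ : Fin n}

theorem le_or_exists_vertexCoords_le (hbI : isInt b) (hsupp : ∀ i, ℓ < i → b i = 0)
    {y : Fin n → ℝ} (hy : y ∈ lexIntUpper b) : b ≤ y ∨ ∃ k < ℓ, vertexCoords b k ≤ y := by
  rcases eq_on_Iio_or_exists_lt_of_toLex_le hy.2.2 ℓ with hpre | ⟨k, hk, hpre, hlt⟩
  · refine Or.inl fun i => ?_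
    rcases lt_or_ge i ℓ with h | h
    · exact (hpre i h).le
    rcases h.eq_or_lt with rfl | h
    · exact Pi.apply_le_of_toLex hy.2.2 hpre
    · exact (hsupp i h).le.trans (hy.1 i)
  · refine Or.inr ⟨k, hk, fun i => ?_⟩
    rcases lt_trichotomy i k with h | rfl | h
    · simp [vertexCoords, h, hpre i h]
    · simpa [vertexCoords] using int_add_one_le_of_lt (hbI i) (hy.2.1 i) hlt
    · simpa [vertexCoords, h.ne', not_lt.mpr h.le] using hy.1 i

theorem add_one_le_add_sum_Ioi (hb0 : 0 ≤ b) (hbI : isInt b) (hbℓ : 0 < b ℓ) {k : Fin n}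
    (hk : k < ℓ) {y : Fin n → ℝ} (hy : y ∈ lexIntUpper b) (hpre : ∀ j < k, b j = y j) :
    b k + 1 ≤ y k + ∑ j ∈ Finset.Ioi k, y j := by
  have htail : 0 ≤ ∑ j ∈ Finset.Ioi k, y j := Finset.sum_nonneg fun j _ => hy.1 j
  rcases (Pi.apply_le_of_toLex hy.2.2 hpre).lt_or_eq with hlt | heq
  · linarith [int_add_one_le_of_lt (hbI k) (hy.2.1 k) hlt]
  -- `y ⪰ b` agrees with `b` up to `k`, and `b` has the integer `b ℓ ≥ 1` after `k`
  obtain ⟨m, hkm, hm⟩ : ∃ m, k < m ∧ 1 ≤ y m := by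
    rcases eq_on_Iio_or_exists_lt_of_toLex_le hy.2.2 ℓ with hpreℓ | ⟨m, -, hprem, hltm⟩
    · refine ⟨ℓ, hk, le_trans ?_ (Pi.apply_le_of_toLex hy.2.2 hpreℓ)⟩
      simpa using int_add_one_le_of_lt ⟨0, by simp⟩ (hbI ℓ) hbℓ
    refine ⟨m, lt_of_not_ge fun hmk => ?_, ?_⟩
    · rcases hmk.lt_or_eq with h | rfl
      · exact hltm.ne (hpre m h)
      · exact hltm.ne heq
    · linarith [int_add_one_le_of_lt (hbI m) (hy.2.1 m) hltm, show (0 : ℝ) ≤ b m from hb0 m]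
  linarith [Finset.single_le_sum (fun j (_ : j ∈ Finset.Ioi k) => hy.1 j) (Finset.mem_Ioi.mpr hkm)]

theorem toLex_tailSumAt_vertexCoords_le (hb0 : 0 ≤ b) (hbI : isInt b) (hbℓ : 0 < b ℓ)
    {k : Fin n} (hk : k < ℓ) {y : Fin n → ℝ} (hy : y ∈ lexIntUpper b) :
    toLex (tailSumAt k (vertexCoords b k)) ≤ toLex (tailSumAt k y) := by
  rcases eq_on_Iio_or_exists_lt_of_toLex_le hy.2.2 k with hpre | ⟨i, hik, hpre, hlt⟩
  · refine Pi.toLex_monotone fun i => ?_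
    rcases lt_trichotomy i k with h | rfl | h
    · simp [tailSumAt_apply_of_ne h.ne, vertexCoords, h, hpre i h]
    · have htail0 : ∑ j ∈ Finset.Ioi i, vertexCoords b i j = 0 :=
        Finset.sum_eq_zero fun j hj => by
          simp [vertexCoords, (Finset.mem_Ioi.mp hj).ne', not_lt.mpr (Finset.mem_Ioi.mp hj).le]
      rw [tailSumAt_apply_self, tailSumAt_apply_self, htail0, add_zero]
      simpa [vertexCoords] using add_one_le_add_sum_Ioi hb0 hbI hbℓ hk hy hpre
    · simpa [tailSumAt_apply_of_ne h.ne', vertexCoords, h.ne', not_lt.mpr h.le] using hy.1 i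
  · refine le_of_lt ⟨i, fun j hj => ?_, ?_⟩
    · simp [tailSumAt_apply_of_ne (hj.trans hik).ne, vertexCoords, hj.trans hik, hpre j hj]
    · simpa [tailSumAt_apply_of_ne hik.ne, vertexCoords, hik] using hlt

end LexIntUpper

section ConvexHull
variable {n : ℕ} {C : Matrix (Fin n) (Fin n) ℤ} {b : Fin n → ℝ}

theorem QC_eq_convexHull_preimage (hC : IsUnit C.det) (xb : Fin n → ℝ) :
    QC C xb = convexHull ℝ (coords C ⁻¹' lexIntUpper (coords C xb)) := by
  unfold QC
  congr 1
  ext x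
  simp only [Set.mem_ofPred_eq, Set.mem_preimage, lexIntUpper, lexLeC_iff hC,
    isInt_coords_iff hC, Pi.le_def, Pi.zero_apply, coords_apply]

theorem nonneg_of_mem_convexHull_preimage_lexIntUpper {x : Fin n → ℝ}
    (hx : x ∈ convexHull ℝ (coords C ⁻¹' lexIntUpper b)) : 0 ≤ coords C x :=
  convexHull_min (fun _ hy => hy.1) ((convex_Ici 0).linear_preimage (coords C)) hx

theorem add_mem_convexHull_preimage_lexIntUpper (hC : IsUnit C.det) {x d : Fin n → ℝ}
    (hx : x ∈ convexHull ℝ (coords C ⁻¹' lexIntUpper b)) (hd : 0 ≤ coords C d) :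
    x + d ∈ convexHull ℝ (coords C ⁻¹' lexIntUpper b) := by
  set g : Fin n → Fin n → ℝ := fun i => ofCoords C (Pi.single i 1)
  have hg : ∀ i, ∀ s ∈ coords C ⁻¹' lexIntUpper b, s + g i ∈ coords C ⁻¹' lexIntUpper b :=
    fun i s hs => by
      simpa [g, coords_ofCoords hC] using
        add_mem_lexIntUpper hs (Pi.single_nonneg.mpr zero_le_one) (isInt_single i)
  have hdecomp : d = ∑ i, coords C d i • g i :=
    coords_injective hC <| by
      simpa [g, map_sum, coords_ofCoords hC] using pi_eq_sum_univ' (coords C d)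
  have hpartial : ∀ s : Finset (Fin n),
      x + ∑ i ∈ s, coords C d i • g i ∈ convexHull ℝ (coords C ⁻¹' lexIntUpper b) := by
    intro s
    induction s using Finset.induction_on with
    | empty => simpa using hx
    | insert i s hi ih =>
      rw [Finset.sum_insert hi, add_comm (_ • _), ← add_assoc]
      exact add_smul_mem_convexHull_of_add_mem (hg i) ih (hd i)
  rw [hdecomp]
  exact hpartial Finset.univ

theorem ofCoords_mem_convexHull_preimage_lexIntUpper (hC : IsUnit C.det)
    (hb : b ∈ lexIntUpper b) : ofCoords C b ∈ convexHull ℝ (coords C ⁻¹' lexIntUpper b) :=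
  subset_convexHull ℝ _ ((ofCoords_mem_preimage hC).mpr hb)

theorem forall_add_smul_mem_convexHull_iff (hC : IsUnit C.det) (hb : b ∈ lexIntUpper b)
    (d : Fin n → ℝ) :
    (∀ x ∈ convexHull ℝ (coords C ⁻¹' lexIntUpper b), ∀ t : ℝ, 0 ≤ t →
      x + t • d ∈ convexHull ℝ (coords C ⁻¹' lexIntUpper b)) ↔ 0 ≤ coords C d := by
  refine ⟨fun h i => ?_, fun hd x hx t ht =>
    add_mem_convexHull_preimage_lexIntUpper hC hx (by simpa using smul_nonneg ht hd)⟩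
  show (0 : ℝ) ≤ coords C d i
  by_contra! hneg
  have hbi : (0 : ℝ) ≤ b i := hb.1 i
  -- the step `t = (bᵢ + 1) / -dᵢ` from `ofCoords C b` makes coordinate `i` equal to `-1`
  have hray := nonneg_of_mem_convexHull_preimage_lexIntUpper
    (h _ (ofCoords_mem_convexHull_preimage_lexIntUpper hC hb) ((b i + 1) / -coords C d i)
      (div_nonneg (by linarith) (by linarith))) i
  have ht : (b i + 1) / -coords C d i * coords C d i = -(b i + 1) := by
    rw [div_neg, neg_mul, div_mul_cancel₀ _ hneg.ne]
  simp only [map_add, map_smul, coords_ofCoords hC, Pi.add_apply, Pi.smul_apply, smul_eq_mul,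
    Pi.zero_apply, ht] at hray
  linarith

theorem interior_convexHull_preimage_lexIntUpper_nonempty (hC : IsUnit C.det)
    (hb : b ∈ lexIntUpper b) : (interior (convexHull ℝ (coords C ⁻¹' lexIntUpper b))).Nonempty := by
  set U := coords C ⁻¹' Set.univ.pi fun i => Set.Ioi (b i)
  have hUopen : IsOpen U := (isOpen_set_pi Set.finite_univ fun _ _ => isOpen_Ioi).preimage
    (coords C).continuous_of_finiteDimensional
  have hUsub : U ⊆ convexHull ℝ (coords C ⁻¹' lexIntUpper b) := by
    intro x hx
    simpa using add_mem_convexHull_preimage_lexIntUpper hC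
      (ofCoords_mem_convexHull_preimage_lexIntUpper hC hb) (d := x - ofCoords C b)
      fun i => by
        rw [Pi.zero_apply, map_sub, coords_ofCoords hC, Pi.sub_apply, sub_nonneg]
        exact (hx i (Set.mem_univ i)).le
  refine ⟨ofCoords C (b + 1), interior_maximal hUsub hUopen ?_⟩
  simp [U, coords_ofCoords hC]

variable {ℓ : Fin n}

theorem extremePoints_convexHull_preimage_lexIntUpper (hC : IsUnit C.det) (hb0 : 0 ≤ b)
    (hbI : isInt b) (hbℓ : 0 < b ℓ) (hsupp : ∀ i, ℓ < i → b i = 0) :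
    (convexHull ℝ (coords C ⁻¹' lexIntUpper b)).extremePoints ℝ =
      {v | coords C v = b ∨ ∃ k < ℓ, coords C v = vertexCoords b k} := by
  have hb : b ∈ lexIntUpper b := ⟨hb0, hbI, le_rfl⟩
  ext v
  constructor
  · intro hv
    have hvP : v ∈ coords C ⁻¹' lexIntUpper b := extremePoints_convexHull_subset hv
    have key : ∀ y ∈ lexIntUpper b, y ≤ coords C v → coords C v = y := fun y hy hyv => by
      have h2 : (2 : ℝ) • v - ofCoords C y ∈ coords C ⁻¹' lexIntUpper b := by
        simpa [Set.mem_preimage, coords_ofCoords hC, two_smul, add_sub_assoc] using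
          add_mem_lexIntUpper hvP (sub_nonneg.mpr hyv) (isInt_sub hvP.2.1 hy.2.1)
      rw [← eq_of_mem_extremePoints_of_two_smul_sub_mem hv
        (subset_convexHull ℝ _ ((ofCoords_mem_preimage hC).mpr hy)) (subset_convexHull ℝ _ h2),
        coords_ofCoords hC]
    rcases le_or_exists_vertexCoords_le hbI hsupp hvP with hle | ⟨k, hk, hle⟩
    · exact Or.inl (key b hb hle)
    · exact Or.inr ⟨k, hk, key _ (vertexCoords_mem_lexIntUpper hb0 hbI k) hle⟩
  · rintro (hv | ⟨k, hk, hv⟩)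
    · exact mem_extremePoints_convexHull_of_lex_min (coords C) (coords_injective hC)
        (show coords C v ∈ lexIntUpper b by rw [hv]; exact hb) fun s hs => hv ▸ hs.2.2
    · refine mem_extremePoints_convexHull_of_lex_min (tailSumAt k ∘ₗ coords C)
        ((tailSumAt_injective k).comp (coords_injective hC))
        (show coords C v ∈ lexIntUpper b by rw [hv]; exact vertexCoords_mem_lexIntUpper hb0 hbI k)
        fun s hs => ?_
      simp only [LinearMap.comp_apply, hv]
      exact toLex_tailSumAt_vertexCoords_le hb0 hbI hbℓ hk hs

end ConvexHull

/-- Let `c¹,…,cⁿ` (the rows of a unimodular `C`) be a lattice basis of `ℤⁿ`, let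
`x̄ ∈ K_C ∩ ℤⁿ` with `cⁱ·x̄ > 0` for some `i`, and let `ℓ` be the largest such index.
Then (1) for each `k < ℓ` there is a unique point `v` with `cⁱ·v = cⁱ·x̄` for `i < k`,
`cᵏ·v = cᵏ·x̄ + 1`, `cⁱ·v = 0` for `i > k`; (2) the extreme points of `Q_C(x̄)` are
exactly `x̄` together with these points; (3) the recession cone of `Q_C(x̄)` is `K_C`;
(4) `Q_C(x̄)` is full-dimensional. -/
theorem stmt8 {n : ℕ} (C : Matrix (Fin n) (Fin n) ℤ) (hC : C.det = 1 ∨ C.det = -1)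
    (xb : Fin n → ℝ) (hK : ∀ i, 0 ≤ rdot (C i) xb) (hI : isInt xb)
    (ℓ : Fin n) (hℓ : 0 < rdot (C ℓ) xb) (hmax : ∀ i : Fin n, 0 < rdot (C i) xb → i ≤ ℓ) :
    (∀ k : Fin n, k < ℓ → ∃! v : Fin n → ℝ,
      (∀ i : Fin n, i < k → rdot (C i) v = rdot (C i) xb) ∧
      rdot (C k) v = rdot (C k) xb + 1 ∧
      (∀ i : Fin n, k < i → rdot (C i) v = 0)) ∧
    (Set.extremePoints ℝ (QC C xb) =
      {v : Fin n → ℝ | v = xb ∨ ∃ k : Fin n, k < ℓ ∧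
        (∀ i : Fin n, i < k → rdot (C i) v = rdot (C i) xb) ∧
        rdot (C k) v = rdot (C k) xb + 1 ∧
        (∀ i : Fin n, k < i → rdot (C i) v = 0)}) ∧
    (∀ d : Fin n → ℝ,
      (∀ x ∈ QC C xb, ∀ t : ℝ, 0 ≤ t → x + t • d ∈ QC C xb) ↔ ∀ i, 0 ≤ rdot (C i) d) ∧
    (interior (QC C xb)).Nonempty := by
  have hU : IsUnit C.det := Int.isUnit_iff.mpr hC
  set b := coords C xb with hb_def
  have hb0 : 0 ≤ b := fun i => by simpa [b] using hK i
  have hbI : isInt b := (isInt_coords_iff hU).mpr hI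
  have hbℓ : 0 < b ℓ := by simpa [b] using hℓ
  have hsupp : ∀ i, ℓ < i → b i = 0 := fun i hi =>
    le_antisymm (by simpa [b] using fun h => (hmax i h).not_gt hi) (hb0 i)
  have hb : b ∈ lexIntUpper b := ⟨hb0, hbI, le_rfl⟩
  have hvertex : ∀ (v : Fin n → ℝ) (k : Fin n),
      ((∀ i : Fin n, i < k → rdot (C i) v = rdot (C i) xb) ∧
        rdot (C k) v = rdot (C k) xb + 1 ∧ (∀ i : Fin n, k < i → rdot (C i) v = 0)) ↔
      coords C v = vertexCoords b k := fun v k => by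
    simp [eq_vertexCoords_iff, b]
  rw [QC_eq_convexHull_preimage hU]
  refine ⟨fun k _ => ?_, ?_, forall_add_smul_mem_convexHull_iff hU hb,
    interior_convexHull_preimage_lexIntUpper_nonempty hU hb⟩
  · simp only [hvertex]
    exact ⟨ofCoords C (vertexCoords b k), coords_ofCoords hU _,
      fun v hv => coords_injective hU (hv.trans (coords_ofCoords hU _).symm)⟩
  · rw [extremePoints_convexHull_preimage_lexIntUpper hU hb0 hbI hbℓ hsupp]
    simp only [hvertex, hb_def, (coords_injective hU).eq_iff]
end

section
/- Let T′ ⊆ ℝ² be the triangle conv{(0, 3/2), (1/4, 0), (1, 0)}. Then: (a) the inequality 2x₁ + x₂ ≥ 2 is valid for every integer point of T′ (indeed T′ ∩ ℤ² = {(1,0)}), and every point of T′ other than (1,0) violates it; (b) 2x₁ + x₂ ≥ 2 is not a split cut for T′: for every π ∈ ℤ² and π₀ ∈ ℤ there exists a point x in {x ∈ T′ : π·x ≤ π₀} ∪ {x ∈ T′ : π·x ≥ π₀ + 1} with 2x₁ + x₂ < 2. -/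
/-!
Every point of `T'` satisfies `0 ≤ x₂`, `3x₁ + 2x₂ ≤ 3` and `12x₁ + 2x₂ ≥ 3`; these force an
integer point to be `(1,0)` and force `2x₁ + x₂ < 2` everywhere else. For part (b) three points of
`T' \ {(1,0)}` suffice: `(1/4,0)`, `(1/2,0)` and `(0,3/2)` cannot all lie strictly between
`π·x = π₀` and `π·x = π₀ + 1`. The first two force `π₁ = 2π₀ + 1` with `π₀ ∈ {-1, 0}`, and then
`3π₂/2` would have to lie strictly inside `(-1, 0)` or `(0, 1)`, which no multiple of `3/2` does.
-/

def triangle : Set (Fin 2 → ℝ) := convexHull ℝ {![(0:ℝ), 3/2], ![(1:ℝ)/4, 0], ![(1:ℝ), 0]}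

lemma rdot_two (c : Fin 2 → ℤ) (a b : ℝ) : rdot c ![a, b] = c 0 * a + c 1 * b := by
  simp [rdot]

lemma isInt_vec_two (a b : ℤ) : isInt ![(a:ℝ), b] := by
  intro i
  fin_cases i
  exacts [⟨a, rfl⟩, ⟨b, rfl⟩]

lemma vertices_subset_triangle :
    {![(0:ℝ), 3/2], ![(1:ℝ)/4, 0], ![(1:ℝ), 0]} ⊆ triangle :=
  subset_convexHull ℝ _

lemma half_mem_triangle : ![(1:ℝ)/2, 0] ∈ triangle := by
  refine segment_subset_convexHull (x := ![(1:ℝ)/4, 0]) (y := ![(1:ℝ), 0])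
    (by simp) (by simp) ⟨2/3, 1/3, by norm_num, by norm_num, by norm_num, ?_⟩
  ext i; fin_cases i <;> norm_num

lemma triangle_subset_inequalities :
    triangle ⊆ {x | 0 ≤ x 1 ∧ 3 * x 0 + 2 * x 1 ≤ 3 ∧ 3 ≤ 12 * x 0 + 2 * x 1} := by
  refine convexHull_min ?_ ?_
  · rintro x (rfl | rfl | rfl) <;> norm_num
  · intro x hx y hy a b ha hb hab
    simp only [Set.mem_ofPred_eq, Pi.add_apply, Pi.smul_apply, smul_eq_mul] at *
    refine ⟨by nlinarith, by nlinarith, by nlinarith⟩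

lemma eq_of_mem_triangle_of_isInt {x : Fin 2 → ℝ} (hx : x ∈ triangle) (hint : isInt x) :
    x = ![1, 0] := by
  obtain ⟨h₁, h₂, h₃⟩ := triangle_subset_inequalities hx
  obtain ⟨a, ha⟩ := hint 0
  obtain ⟨b, hb⟩ := hint 1
  simp only [ha, hb] at h₁ h₂ h₃
  have : 0 ≤ b ∧ 3 * a + 2 * b ≤ 3 ∧ 3 ≤ 12 * a + 2 * b := by
    refine ⟨?_, ?_, ?_⟩ <;> rify <;> assumption
  obtain ⟨rfl, rfl⟩ : a = 1 ∧ b = 0 := by omega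
  ext i; fin_cases i <;> simp [ha, hb]

lemma lt_two_of_mem_triangle_of_ne {x : Fin 2 → ℝ} (hx : x ∈ triangle) (hne : x ≠ ![1, 0]) :
    2 * x 0 + x 1 < 2 := by
  obtain ⟨h₁, h₂, -⟩ := triangle_subset_inequalities hx
  by_contra! hge
  have hx₀ : x 0 = 1 := by linarith
  have hx₁ : x 1 = 0 := by linarith
  exact hne (by ext i; fin_cases i <;> simp [hx₀, hx₁])

lemma test_points_subset_triangle_diff :
    ({![(1:ℝ)/4, 0], ![(1:ℝ)/2, 0], ![(0:ℝ), 3/2]} : Set (Fin 2 → ℝ)) ⊆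
      triangle \ {![1, 0]} := by
  rintro p (rfl | rfl | rfl)
  · exact ⟨vertices_subset_triangle (by simp), by simp [funext_iff]⟩
  · exact ⟨half_mem_triangle, by simp [funext_iff]⟩
  · exact ⟨vertices_subset_triangle (by simp), by simp [funext_iff]⟩

lemma exists_not_strictly_inside_split (π : Fin 2 → ℤ) (π₀ : ℤ) :
    ∃ p ∈ ({![(1:ℝ)/4, 0], ![(1:ℝ)/2, 0], ![(0:ℝ), 3/2]} : Set (Fin 2 → ℝ)),
      rdot π p ≤ π₀ ∨ π₀ + 1 ≤ rdot π p := by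
  by_contra! h
  simp only [Set.mem_insert_iff, Set.mem_singleton_iff, forall_eq_or_imp, forall_eq,
    rdot_two] at h
  obtain ⟨⟨a₁, a₂⟩, ⟨b₁, b₂⟩, ⟨c₁, c₂⟩⟩ := h
  have : 4 * π₀ < π 0 ∧ π 0 < 4 * π₀ + 4 ∧ 2 * π₀ < π 0 ∧ π 0 < 2 * π₀ + 2 ∧
      2 * π₀ < 3 * π 1 ∧ 3 * π 1 < 2 * π₀ + 2 := by
    refine ⟨?_, ?_, ?_, ?_, ?_, ?_⟩ <;> rify <;> linarith
  omega

/-- Let `T' ⊆ ℝ²` be the triangle `conv {(0,3/2), (1/4,0), (1,0)}`. Then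
(a) `T' ∩ ℤ² = {(1,0)}`, the inequality `2x₁ + x₂ ≥ 2` is valid for every integer point
of `T'`, and every point of `T'` other than `(1,0)` violates it;
(b) `2x₁ + x₂ ≥ 2` is not a split cut for `T'`: for all `π ∈ ℤ²`, `π₀ ∈ ℤ` there is a
point of `{x ∈ T' : π·x ≤ π₀} ∪ {x ∈ T' : π·x ≥ π₀ + 1}` with `2x₁ + x₂ < 2`. -/
theorem stmt15 (T : Set (Fin 2 → ℝ))
    (hT : T = convexHull ℝ {![(0:ℝ), 3/2], ![(1:ℝ)/4, 0], ![(1:ℝ), 0]}) :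
    ({x ∈ T | isInt x} = {![(1:ℝ), 0]}) ∧
    (∀ x ∈ T, isInt x → 2 * x 0 + x 1 ≥ 2) ∧
    (∀ x ∈ T, x ≠ ![(1:ℝ), 0] → 2 * x 0 + x 1 < 2) ∧
    (∀ π : Fin 2 → ℤ, ∀ π₀ : ℤ,
      ∃ x ∈ T, (rdot π x ≤ (π₀ : ℝ) ∨ (π₀ : ℝ) + 1 ≤ rdot π x) ∧ 2 * x 0 + x 1 < 2) := by
  obtain rfl : T = triangle := hT
  have hint : isInt ![(1:ℝ), 0] := by simpa using isInt_vec_two 1 0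
  refine ⟨?_, fun x hx hx' => ?_, fun x => lt_two_of_mem_triangle_of_ne, fun π π₀ => ?_⟩
  · ext x
    exact ⟨fun ⟨hx, hx'⟩ => eq_of_mem_triangle_of_isInt hx hx',
      fun hx => hx ▸ ⟨vertices_subset_triangle (by simp), hint⟩⟩
  · rw [eq_of_mem_triangle_of_isInt hx hx']
    norm_num
  · obtain ⟨p, hp, hsplit⟩ := exists_not_strictly_inside_split π π₀
    obtain ⟨hp_mem, hp_ne⟩ := test_points_subset_triangle_diff hp
    exact ⟨p, hp_mem, hsplit, lt_two_of_mem_triangle_of_ne hp_mem hp_ne⟩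
end
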